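/- For every pair of distributions P_1, P_2 ∈ 𝒫(𝒵), the minimum over P ∈ 𝒫̄(𝒵) of D_KL(P‖P_1) + D_KL(P‖P_2) equals 2·D_B(P_1,P_2), and the minimum is attained uniquely at the distribution P*(z) = √(P_1(z)P_2(z)) / Σ_{z'∈𝒵} √(P_1(z')P_2(z')). -/
import Mathlib


open scoped BigOperators
open Filter MeasureTheory Matrix

namespace TwoSampleTest

variable {m : ℕ}

/-- All probability distributions on the alphabet `Fin (m+1)` (the set `𝒫̄(𝒵)`). -/
def IsDist (P : Fin (m+1) → ℝ) : Prop :=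
  (∀ i, 0 ≤ P i) ∧ ∑ i, P i = 1

/-- Strictly positive probability distributions on `Fin (m+1)` (the set `𝒫(𝒵)`). -/
def IsPosDist (P : Fin (m+1) → ℝ) : Prop :=
  (∀ i, 0 < P i) ∧ ∑ i, P i = 1

/-- The open coordinate domain `Ξ ⊆ ℝ^m`. -/
def Xi (m : ℕ) : Set (Fin m → ℝ) :=
  {x | (∀ i, 0 < x i) ∧ ∑ i, x i < 1}

/-- Coordinate vector (first `m` components) of a distribution on `Fin (m+1)`. -/
def coordOf (P : Fin (m+1) → ℝ) : Fin m → ℝ := fun i => P i.castSucc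

/-- Euclidean norm on `ℝ^m`. -/
noncomputable def l2norm (v : Fin m → ℝ) : ℝ := Real.sqrt (∑ i, (v i)^2)

/-- ℓ₁ distance between two distributions. -/
noncomputable def l1dist (P Q : Fin (m+1) → ℝ) : ℝ := ∑ i, |P i - Q i|

/-- A divergence on `𝒫(𝒵)`, viewed through coordinates in `Ξ`. -/
structure Divergence (m : ℕ) where
  f : (Fin m → ℝ) → (Fin m → ℝ) → ℝ
  smooth : ContDiffOn ℝ (⊤ : ℕ∞)
    (fun p : (Fin m → ℝ) × (Fin m → ℝ) => f p.1 p.2) ((Xi m) ×ˢ (Xi m))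
  nonneg : ∀ s ∈ Xi m, ∀ r ∈ Xi m, 0 ≤ f s r
  eq_zero_iff : ∀ s ∈ Xi m, ∀ r ∈ Xi m, (f s r = 0 ↔ s = r)
  taylor : ∀ r ∈ Xi m, ∃ G : Matrix (Fin m) (Fin m) ℝ, G.PosDef ∧
      ∃ C > (0:ℝ), ∃ δ > (0:ℝ), ∀ e : Fin m → ℝ, l2norm e < δ → r + e ∈ Xi m →
        |f (r + e) r - (1/2) * ∑ i, ∑ j, G i j * e i * e j| ≤ C * (l2norm e)^3
  boundary : ∀ r ∈ Xi m, ∀ S : ℕ → (Fin m → ℝ), (∀ n, S n ∈ Xi m) →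
      ∀ L ∈ frontier (Xi m), Filter.Tendsto S Filter.atTop (nhds L) →
        0 < Filter.liminf (fun n => f (S n) r) Filter.atTop

/-- The divergence evaluated at two distributions. -/
noncomputable def Dapp (D : Divergence m) (T R : Fin (m+1) → ℝ) : ℝ :=
  D.f (coordOf T) (coordOf R)

/-- The matrix `A_{D,P}` associated with a divergence `D` at coordinate point `p`:
`a_{ij} = ½ ∂²D(S‖p)/∂S_i∂S_j` at `S = p`. -/
noncomputable def Amat (D : Divergence m) (p : Fin m → ℝ) : Matrix (Fin m) (Fin m) ℝ :=
  Matrix.of fun i j =>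
    (1/2) * fderiv ℝ (fun s => fderiv ℝ (fun s' => D.f s' p) s (Pi.single j 1)) p (Pi.single i 1)

/-- The matrix `Σ_P`. -/
noncomputable def SigmaMat (P : Fin (m+1) → ℝ) : Matrix (Fin m) (Fin m) ℝ :=
  Matrix.of fun i j =>
    if i = j then 1 / P i.castSucc + 1 / P (Fin.last m) else 1 / P (Fin.last m)

/-- `D` is an invariant divergence with constant `η`. -/
def IsInvariant (D : Divergence m) (η : ℝ) : Prop :=
  ∀ P : Fin (m+1) → ℝ, IsPosDist P → Amat D (coordOf P) = η • SigmaMat P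

/-- Quadratic form `vᵀ M v`. -/
noncomputable def quadForm (M : Matrix (Fin m) (Fin m) ℝ) (v : Fin m → ℝ) : ℝ :=
  v ⬝ᵥ M.mulVec v

/-- Type (empirical distribution) of a sequence. -/
noncomputable def typeOf {n : ℕ} (x : Fin n → Fin (m+1)) : Fin (m+1) → ℝ :=
  fun i => ((Finset.univ.filter (fun t => x t = i)).card : ℝ) / n

/-- Probability of a sequence under i.i.d. sampling from `P`. -/
def probSeq (P : Fin (m+1) → ℝ) {n : ℕ} (x : Fin n → Fin (m+1)) : ℝ := ∏ t, P (x t)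

/-- Type-I error of the divergence test with test statistic `Dfun` and threshold `r`,
under common distribution `P`: the probability that `Dfun(T_{X^n}‖T_{Y^n}) ≥ r`. -/
noncomputable def alpha (Dfun : (Fin (m+1) → ℝ) → (Fin (m+1) → ℝ) → ℝ) (r : ℝ)
    (P : Fin (m+1) → ℝ) (n : ℕ) : ℝ :=
  ∑ x : Fin n → Fin (m+1), ∑ y : Fin n → Fin (m+1),
    if r ≤ Dfun (typeOf x) (typeOf y) then probSeq P x * probSeq P y else 0

/-- Type-II error: the probability under `P₁ × P₂` that `Dfun(T_{X^n}‖T_{Y^n}) < r`. -/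
noncomputable def beta (Dfun : (Fin (m+1) → ℝ) → (Fin (m+1) → ℝ) → ℝ) (r : ℝ)
    (P₁ P₂ : Fin (m+1) → ℝ) (n : ℕ) : ℝ :=
  ∑ x : Fin n → Fin (m+1), ∑ y : Fin n → Fin (m+1),
    if Dfun (typeOf x) (typeOf y) < r then probSeq P₁ x * probSeq P₂ y else 0

/-- Kullback-Leibler divergence (with the convention `0 · ln 0 = 0`). -/
noncomputable def KL (P Q : Fin (m+1) → ℝ) : ℝ := ∑ i, P i * Real.log (P i / Q i)

/-- KL divergence variance. -/
noncomputable def VKL (P Q : Fin (m+1) → ℝ) : ℝ :=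
  ∑ i, P i * (Real.log (P i / Q i) - KL P Q)^2

/-- Bhattacharyya distance. -/
noncomputable def DB (P Q : Fin (m+1) → ℝ) : ℝ :=
  - Real.log (∑ i, Real.sqrt (P i * Q i))

/-- The normalized geometric mean `P*` of two distributions. -/
noncomputable def Pstar (P₁ P₂ : Fin (m+1) → ℝ) : Fin (m+1) → ℝ :=
  fun i => Real.sqrt (P₁ i * P₂ i) / ∑ j, Real.sqrt (P₁ j * P₂ j)

/-- Jensen–Shannon divergence. -/
noncomputable def DJS (T R : Fin (m+1) → ℝ) : ℝ :=
  (1/2) * KL T (fun i => (T i + R i)/2) + (1/2) * KL R (fun i => (T i + R i)/2)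

/-- Law of `m` i.i.d. standard Gaussians. -/
noncomputable def stdGaussianPi (m : ℕ) : Measure (Fin m → ℝ) :=
  Measure.pi (fun _ => ProbabilityTheory.gaussianReal 0 1)

/-- Tail probability of the generalized chi-square distribution with weights `lam`:
`P(∑ lam i * U i ^ 2 ≥ c)` for i.i.d. standard normal `U`. -/
noncomputable def genChiSqTail (m : ℕ) (lam : Fin m → ℝ) (c : ℝ) : ℝ :=
  (stdGaussianPi m {u | c ≤ ∑ i, lam i * (u i)^2}).toReal

/-- Tail probability of the chi-square distribution with `m` degrees of freedom. -/
noncomputable def chiSqTail (m : ℕ) (c : ℝ) : ℝ := genChiSqTail m (fun _ => 1) c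

/-- Inverse of the chi-square tail probability. -/
noncomputable def chiSqTailInv (m : ℕ) (ε : ℝ) : ℝ :=
  sInf {c : ℝ | 0 < c ∧ chiSqTail m c ≤ ε}

/-- The linear functional `ℓ_P(T,R)`. -/
noncomputable def ellP (P P₁ P₂ T R : Fin (m+1) → ℝ) : ℝ :=
  ∑ i, (T i - P i) * Real.log (P i / P₁ i) + ∑ i, (R i - P i) * Real.log (P i / P₂ i)

/-- Membership of `(T,R)` in the set `A_{Σ_P}(r)`. -/
noncomputable def memASigma (P T R : Fin (m+1) → ℝ) (r : ℝ) : Prop :=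
  IsPosDist T ∧ IsPosDist R ∧
    quadForm (SigmaMat P) (fun i => coordOf T i - coordOf P i)
      + quadForm (SigmaMat P) (fun i => coordOf R i - coordOf P i) ≤ r

/-- The vector with components `ln(P_i/Q_i) − ln(P_k/Q_k)`, `i = 1,…,k−1`. -/
noncomputable def cvec (P Q : Fin (m+1) → ℝ) : Fin m → ℝ :=
  fun i => Real.log (P i.castSucc / Q i.castSucc) - Real.log (P (Fin.last m) / Q (Fin.last m))

/-- A type distribution with denominator `n`. -/
def IsTypeDist (n : ℕ) (P : Fin (m+1) → ℝ) : Prop :=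
  IsDist P ∧ ∀ i, ∃ a : ℕ, P i = (a : ℝ) / n

/-- The best (largest) type-II error exponent `−(1/n) ln β_n` over all thresholds `r > 0`
whose type-I error is at most `ε` for every common distribution `P ∈ 𝒫(𝒵)`. -/
noncomputable def supExp (Dfun : (Fin (m+1) → ℝ) → (Fin (m+1) → ℝ) → ℝ)
    (P₁ P₂ : Fin (m+1) → ℝ) (ε : ℝ) (n : ℕ) : ℝ :=
  sSup { v : ℝ | ∃ r : ℝ, 0 < r ∧
    (∀ P : Fin (m+1) → ℝ, IsPosDist P → alpha Dfun r P n ≤ ε) ∧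
    v = -(Real.log (beta Dfun r P₁ P₂ n)) / n }

section Aux

variable {m : ℕ}

lemma Zpos {P₁ P₂ : Fin (m+1) → ℝ} (h₁ : IsPosDist P₁) (h₂ : IsPosDist P₂) :
    0 < ∑ j, Real.sqrt (P₁ j * P₂ j) := by
  apply Finset.sum_pos (fun i _ => Real.sqrt_pos.2 (mul_pos (h₁.1 i) (h₂.1 i)))
  exact Finset.univ_nonempty

lemma pstar_pos {P₁ P₂ : Fin (m+1) → ℝ} (h₁ : IsPosDist P₁) (h₂ : IsPosDist P₂) :
    IsPosDist (Pstar P₁ P₂) := by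
  have hZ := Zpos h₁ h₂
  constructor
  · intro i
    exact div_pos (Real.sqrt_pos.2 (mul_pos (h₁.1 i) (h₂.1 i))) hZ
  · unfold Pstar
    rw [← Finset.sum_div, div_self hZ.ne']

/-- Gibbs' inequality with equality case. -/
lemma gibbs {P Q : Fin (m+1) → ℝ} (hP : IsDist P) (hQ : IsPosDist Q) :
    0 ≤ KL P Q ∧ (KL P Q = 0 ↔ P = Q) := by
  have key : ∀ i : Fin (m+1), P i - Q i ≤ P i * Real.log (P i / Q i) := by
    intro i
    rcases eq_or_lt_of_le (hP.1 i) with h | h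
    · rw [← h]; simp; exact (hQ.1 i).le
    · have hx : 0 < Q i / P i := div_pos (hQ.1 i) h
      have := Real.log_le_sub_one_of_pos hx
      have hlog : Real.log (P i / Q i) = - Real.log (Q i / P i) := by
        rw [← Real.log_inv, inv_div]
      have hc : P i * (Q i / P i) = Q i := by field_simp
      rw [hlog]
      nlinarith [mul_le_mul_of_nonneg_left this h.le, hc]
  have strict : ∀ i : Fin (m+1), P i ≠ Q i → P i - Q i < P i * Real.log (P i / Q i) := by
    intro i hne
    rcases eq_or_lt_of_le (hP.1 i) with h | h
    · rw [← h]; simp; exact hQ.1 i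
    · have hx : 0 < Q i / P i := div_pos (hQ.1 i) h
      have hx1 : Q i / P i ≠ 1 := by
        intro hc
        exact hne ((div_eq_one_iff_eq h.ne').1 hc).symm
      have := Real.log_lt_sub_one_of_pos hx hx1
      have hlog : Real.log (P i / Q i) = - Real.log (Q i / P i) := by
        rw [← Real.log_inv, inv_div]
      have hc : P i * (Q i / P i) = Q i := by field_simp
      rw [hlog]
      nlinarith [mul_lt_mul_of_pos_left this h, hc]
  have hsum : ∑ i, (P i - Q i) = 0 := by
    rw [Finset.sum_sub_distrib, hP.2, hQ.2]; ring
  have hle : 0 ≤ KL P Q := by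
    unfold KL
    calc (0:ℝ) = ∑ i, (P i - Q i) := hsum.symm
    _ ≤ _ := Finset.sum_le_sum (fun i _ => key i)
  refine ⟨hle, ?_, ?_⟩
  · intro h0
    by_contra hne
    have : ∃ i, P i ≠ Q i := by
      by_contra hc; push_neg at hc; exact hne (funext hc)
    obtain ⟨i, hi⟩ := this
    have : ∑ i, (P i - Q i) < ∑ i, P i * Real.log (P i / Q i) :=
      Finset.sum_lt_sum (fun i _ => key i) ⟨i, Finset.mem_univ i, strict i hi⟩
    rw [hsum] at this
    exact absurd h0 (by unfold KL; linarith)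
  · intro h; subst h
    unfold KL
    apply Finset.sum_eq_zero
    intro i _
    rw [div_self (hQ.1 i).ne']
    simp

lemma kl_sum_eq {P₁ P₂ : Fin (m+1) → ℝ} (h₁ : IsPosDist P₁) (h₂ : IsPosDist P₂)
    {P : Fin (m+1) → ℝ} (hP : IsDist P) :
    KL P P₁ + KL P P₂ = 2 * KL P (Pstar P₁ P₂) + 2 * DB P₁ P₂ := by
  have hZ := Zpos h₁ h₂
  set Z := ∑ j, Real.sqrt (P₁ j * P₂ j) with hZdef
  have hDB : DB P₁ P₂ = - Real.log Z := rfl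
  unfold KL
  rw [← Finset.sum_add_distrib, Finset.mul_sum]
  have hP1 : (1:ℝ) = ∑ i, P i := hP.2.symm
  have : 2 * DB P₁ P₂ = ∑ i, P i * (2 * DB P₁ P₂) := by
    rw [← Finset.sum_mul, hP.2, one_mul]
  rw [this, ← Finset.sum_add_distrib]
  apply Finset.sum_congr rfl
  intro i _
  rcases eq_or_lt_of_le (hP.1 i) with h | h
  · rw [← h]; ring
  · have hg : 0 < Real.sqrt (P₁ i * P₂ i) := Real.sqrt_pos.2 (mul_pos (h₁.1 i) (h₂.1 i))
    have hQ : 0 < Pstar P₁ P₂ i := (pstar_pos h₁ h₂).1 i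
    have e1 : Real.log (P i / P₁ i) = Real.log (P i) - Real.log (P₁ i) :=
      Real.log_div h.ne' (h₁.1 i).ne'
    have e2 : Real.log (P i / P₂ i) = Real.log (P i) - Real.log (P₂ i) :=
      Real.log_div h.ne' (h₂.1 i).ne'
    have e3 : Real.log (P i / Pstar P₁ P₂ i)
        = Real.log (P i) - (Real.log (Real.sqrt (P₁ i * P₂ i)) - Real.log Z) := by
      rw [Real.log_div h.ne' hQ.ne']
      unfold Pstar
      rw [Real.log_div hg.ne' hZ.ne']
    have e4 : Real.log (Real.sqrt (P₁ i * P₂ i))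
        = (Real.log (P₁ i) + Real.log (P₂ i)) / 2 := by
      rw [Real.log_sqrt (mul_pos (h₁.1 i) (h₂.1 i)).le,
        Real.log_mul (h₁.1 i).ne' (h₂.1 i).ne']
    rw [e1, e2, e3, e4, hDB]
    ring

end Aux

/-- The minimum over `P ∈ 𝒫̄(𝒵)` of `D_KL(P‖P₁) + D_KL(P‖P₂)` equals
twice the Bhattacharyya distance `2·D_B(P₁,P₂)`, attained uniquely at the normalized
geometric mean `P*`. -/
theorem min_KL_sum_eq_two_bhattacharyya {m : ℕ} (hm : 1 ≤ m)
    (P₁ P₂ : Fin (m+1) → ℝ) (h₁ : IsPosDist P₁) (h₂ : IsPosDist P₂) :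
    IsLeast {v : ℝ | ∃ P : Fin (m+1) → ℝ, IsDist P ∧ v = KL P P₁ + KL P P₂}
      (2 * DB P₁ P₂) ∧
    IsDist (Pstar P₁ P₂) ∧
    KL (Pstar P₁ P₂) P₁ + KL (Pstar P₁ P₂) P₂ = 2 * DB P₁ P₂ ∧
    ∀ P : Fin (m+1) → ℝ, IsDist P → KL P P₁ + KL P P₂ = 2 * DB P₁ P₂ →
      P = Pstar P₁ P₂ := by
  have hps := pstar_pos h₁ h₂
  have hpsD : IsDist (Pstar P₁ P₂) := ⟨fun i => (hps.1 i).le, hps.2⟩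
  have hval : KL (Pstar P₁ P₂) P₁ + KL (Pstar P₁ P₂) P₂ = 2 * DB P₁ P₂ := by
    rw [kl_sum_eq h₁ h₂ hpsD, ((gibbs hpsD hps).2.2 rfl : KL _ _ = 0)]
    ring
  refine ⟨⟨⟨Pstar P₁ P₂, hpsD, hval.symm⟩, ?_⟩, hpsD, hval, ?_⟩
  · rintro v ⟨P, hP, rfl⟩
    rw [kl_sum_eq h₁ h₂ hP]
    have := (gibbs hP hps).1
    linarith
  · intro P hP heq
    rw [kl_sum_eq h₁ h₂ hP] at heq
    exact (gibbs hP hps).2.1 (by linarith)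
end TwoSampleTest
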